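/- arXiv:0707.3394 — 3 statements merged into one kernel-verified Lean document; each statement's English description precedes it below -/
import Mathlib

section
/- Let r ≥ 2 be an integer, let G be a graph of order n, let X be a set of r-cliques of G, and let d > 0 be a real number. Then there exists a subset Y ⊆ X with |Y| ≥ |X| − C(n, r−1)·d such that every (r−1)-clique R contained in some member of Y is contained in more than d members of Y. (In particular, if |X| > n^r/r^{r+7} and d = n/r^{r+8}, then |Y| > n^r/r^{r+8}.) -/
open Real SimpleGraph Finset

private lemma aux_link {V : Type*} [Fintype V] [DecidableEq V] (r : ℕ) (d : ℝ) (hd : 0 < d)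
    (X : Finset (Finset V)) :
    ∃ Y ⊆ X,
      ((Y.card : ℝ) ≥ (X.card : ℝ) -
        (((univ : Finset V).powersetCard (r-1)).filter (fun R => ∃ Q ∈ X, R ⊆ Q)).card * d) ∧
      ∀ R : Finset V, R.card = r - 1 → (∃ Q ∈ Y, R ⊆ Q) →
        ((Y.filter fun Q => R ⊆ Q).card : ℝ) > d := by
  induction X using Finset.strongInduction with
  | _ X ih =>
    by_cases h : ∃ R : Finset V, R.card = r - 1 ∧ (∃ Q ∈ X, R ⊆ Q) ∧
        ((X.filter fun Q => R ⊆ Q).card : ℝ) ≤ d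
    · obtain ⟨R, hRcard, ⟨Q0, hQ0, hRQ0⟩, hle⟩ := h
      set X' := X.filter (fun Q => ¬ R ⊆ Q) with hX'
      have hss : X' ⊂ X := by
        refine Finset.ssubset_iff_of_subset (Finset.filter_subset _ _) |>.mpr ⟨Q0, hQ0, ?_⟩
        simp [hX', hQ0, hRQ0]
      obtain ⟨Y, hYX', hY1, hY2⟩ := ih X' hss
      refine ⟨Y, hYX'.trans (Finset.filter_subset _ _), ?_, hY2⟩
      set L := (((univ : Finset V).powersetCard (r-1)).filter (fun S => ∃ Q ∈ X, S ⊆ Q))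
      set L' := (((univ : Finset V).powersetCard (r-1)).filter (fun S => ∃ Q ∈ X', S ⊆ Q))
      have hRL' : R ∉ L' := by
        simp only [L', Finset.mem_filter, hX', not_and]
        rintro - ⟨Q, hQ, hRQ⟩
        exact hQ.2 hRQ
      have hins : insert R L' ⊆ L := by
        intro S hS
        rcases Finset.mem_insert.mp hS with rfl | hS
        · simp only [L, Finset.mem_filter, Finset.mem_powersetCard]
          exact ⟨⟨Finset.subset_univ _, hRcard⟩, Q0, hQ0, hRQ0⟩
        · simp only [L', L, Finset.mem_filter] at hS ⊢
          exact ⟨hS.1, hS.2.imp fun Q hQ => ⟨Finset.mem_of_mem_filter _ hQ.1, hQ.2⟩⟩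
      have hcardL : (L'.card : ℝ) + 1 ≤ L.card := by
        have := Finset.card_le_card hins
        rw [Finset.card_insert_of_notMem hRL'] at this
        exact_mod_cast this
      have hsplit : (X'.card : ℝ) + ((X.filter fun Q => R ⊆ Q).card : ℝ) = X.card := by
        have := Finset.card_filter_add_card_filter_not (s := X)
          (p := fun Q => R ⊆ Q)
        push_cast [← this]
        ring
      nlinarith [hY1, hcardL, hsplit, hle, hd, (Nat.cast_nonneg L'.card : (0:ℝ) ≤ _)]
    · push_neg at h
      refine ⟨X, le_refl _, ?_, fun R hR hex => h R hR hex⟩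
      have : (0:ℝ) ≤ ((((univ : Finset V).powersetCard (r-1)).filter
          (fun R => ∃ Q ∈ X, R ⊆ Q)).card : ℝ) * d :=
        mul_nonneg (Nat.cast_nonneg _) hd.le
      linarith

/-- Let `r ≥ 2`, `G` a graph of order `n`, `X` a set of `r`-cliques of `G`, and `d > 0`.
Then there is `Y ⊆ X` with `|Y| ≥ |X| - C(n, r-1)·d` such that every `(r-1)`-clique `R`
contained in some member of `Y` is contained in more than `d` members of `Y`. -/
theorem exists_subfamily_large_link {V : Type*} [Fintype V] [DecidableEq V]
    (G : SimpleGraph V) [DecidableRel G.Adj] (r n : ℕ) (d : ℝ)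
    (hr : 2 ≤ r) (hn : Fintype.card V = n) (hd : 0 < d)
    (X : Finset (Finset V)) (hX : ∀ Q ∈ X, G.IsNClique r Q) :
    ∃ Y ⊆ X,
      ((Y.card : ℝ) ≥ (X.card : ℝ) - (n.choose (r - 1)) * d) ∧
      ∀ R : Finset V, R.card = r - 1 → (∃ Q ∈ Y, R ⊆ Q) →
        ((Y.filter fun Q => R ⊆ Q).card : ℝ) > d := by
  obtain ⟨Y, hYX, hY1, hY2⟩ := aux_link r d hd X
  refine ⟨Y, hYX, ?_, hY2⟩
  have hle : ((((univ : Finset V).powersetCard (r-1)).filter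
      (fun R => ∃ Q ∈ X, R ⊆ Q)).card : ℝ) ≤ (n.choose (r - 1) : ℝ) := by
    have h1 := Finset.card_filter_le ((univ : Finset V).powersetCard (r-1))
      (fun R => ∃ Q ∈ X, R ⊆ Q)
    have h2 : ((univ : Finset V).powersetCard (r-1)).card = n.choose (r-1) := by
      rw [Finset.card_powersetCard, Finset.card_univ, hn]
    exact_mod_cast h2 ▸ h1
  nlinarith [hY1, hle, hd]
end

section
/- Let r ≥ 2 be an integer, let G be a graph of order n, and let Y be a nonempty set of r-cliques of G. Then the number of (r−1)-cliques of G that are contained in at least one member of Y is at least r·|Y|/n. -/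
open Real SimpleGraph Finset

/-- Let `r ≥ 2`, `G` a graph of order `n`, and `Y` a nonempty set of `r`-cliques of `G`.
Then the number of `(r-1)`-cliques of `G` contained in at least one member of `Y` is at
least `r·|Y|/n`. -/
theorem card_subcliques_ge {V : Type*} [Fintype V] [DecidableEq V]
    (G : SimpleGraph V) (r n : ℕ)
    (hr : 2 ≤ r) (hn : Fintype.card V = n)
    (Y : Finset (Finset V)) (hY : Y.Nonempty) (hcl : ∀ Q ∈ Y, G.IsNClique r Q) :
    (({R : Finset V | G.IsNClique (r - 1) R ∧ ∃ Q ∈ Y, R ⊆ Q}.ncard : ℝ)) ≥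
      (r : ℝ) * Y.card / n := by
  classical
  set S : Finset (Finset V) := Y.biUnion (fun Q => Q.powersetCard (r - 1)) with hS
  -- n is positive
  obtain ⟨Q0, hQ0⟩ := hY
  have hn0 : 0 < n := by
    have h1 := (hcl Q0 hQ0).card_eq
    have h2 : Q0.card ≤ Fintype.card V := Finset.card_le_univ Q0
    omega
  -- the set equals ↑S
  have hset : {R : Finset V | G.IsNClique (r - 1) R ∧ ∃ Q ∈ Y, R ⊆ Q} = ↑S := by
    ext R
    simp only [Set.mem_setOf_eq, hS, Finset.coe_biUnion, Set.mem_iUnion, Finset.mem_coe,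
      Finset.mem_powersetCard]
    constructor
    · rintro ⟨hR, Q, hQ, hRQ⟩
      exact ⟨Q, hQ, hRQ, hR.card_eq⟩
    · rintro ⟨Q, hQ, hRQ, hcard⟩
      exact ⟨⟨(hcl Q hQ).isClique.subset hRQ, hcard⟩, Q, hQ, hRQ⟩
  rw [hset, Set.ncard_coe_finset]
  rw [ge_iff_le, div_le_iff₀ (by exact_mod_cast hn0)]
  have key : r * Y.card ≤ S.card * n := by
    -- step 1: r * Y.card ≤ ∑_{Q∈Y} |{R ∈ S : R ⊆ Q}|
    have step1 : r * Y.card ≤ ∑ Q ∈ Y, (S.filter (· ⊆ Q)).card := by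
      calc r * Y.card = ∑ Q ∈ Y, r := by
              rw [Finset.sum_const, smul_eq_mul, mul_comm]
        _ = ∑ Q ∈ Y, (Q.powersetCard (r-1)).card := by
              refine Finset.sum_congr rfl fun Q hQ => ?_
              rw [Finset.card_powersetCard, (hcl Q hQ).card_eq]
              have : r - (r - 1) = 1 := by omega
              rw [← Nat.choose_symm (by omega : r - 1 ≤ r), this, Nat.choose_one_right]
        _ ≤ ∑ Q ∈ Y, (S.filter (· ⊆ Q)).card := by
              refine Finset.sum_le_sum fun Q hQ => Finset.card_le_card ?_
              intro R hR
              rw [Finset.mem_filter]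
              refine ⟨Finset.mem_biUnion.2 ⟨Q, hQ, hR⟩, (Finset.mem_powersetCard.1 hR).1⟩
    -- step 2: double counting
    have step2 : ∑ Q ∈ Y, (S.filter (· ⊆ Q)).card
        = ∑ R ∈ S, (Y.filter (fun Q => R ⊆ Q)).card := by
      simp only [Finset.card_filter]
      rw [Finset.sum_comm]
    -- step 3: each R extends to at most n members of Y
    have step3 : ∀ R ∈ S, (Y.filter (fun Q => R ⊆ Q)).card ≤ n := by
      intro R hR
      obtain ⟨Q1, hQ1, hRQ1⟩ := Finset.mem_biUnion.1 hR
      have hRcard : R.card = r - 1 := (Finset.mem_powersetCard.1 hRQ1).2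
      have hinj : Set.InjOn (fun Q => Q \ R) ↑(Y.filter (fun Q => R ⊆ Q)) := by
        intro Q1 hQ1 Q2 hQ2 h
        simp only [Finset.coe_filter, Set.mem_setOf_eq] at hQ1 hQ2
        have e1 := Finset.union_sdiff_of_subset hQ1.2
        have e2 := Finset.union_sdiff_of_subset hQ2.2
        have h' : Q1 \ R = Q2 \ R := h
        rw [← e1, ← e2, h']
      have hmaps : ∀ Q ∈ Y.filter (fun Q => R ⊆ Q),
          Q \ R ∈ (Finset.univ : Finset V).powersetCard 1 := by
        intro Q hQ
        rw [Finset.mem_filter] at hQ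
        rw [Finset.mem_powersetCard]
        refine ⟨Finset.subset_univ _, ?_⟩
        rw [Finset.card_sdiff_of_subset hQ.2, (hcl Q hQ.1).card_eq, hRcard]
        omega
      have := Finset.card_le_card_of_injOn (fun Q => Q \ R) hmaps hinj
      rwa [Finset.card_powersetCard, Finset.card_univ, hn, Nat.choose_one_right] at this
    calc r * Y.card ≤ ∑ R ∈ S, (Y.filter (fun Q => R ⊆ Q)).card := step1.trans_eq step2
      _ ≤ ∑ R ∈ S, n := Finset.sum_le_sum step3
      _ = S.card * n := by rw [Finset.sum_const, smul_eq_mul]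
  exact_mod_cast key
end

section
/- Let r ≥ 2, let 0 < α < r^{-8}/8, set ε = √(2α), and let G be a graph of order n with e(G) ≥ (1 − 1/r − α)n²/2. Let M' be a set of exactly ⌊εn⌋ vertices of G each of degree at most (1 − 1/r − ε)n, and let G' be the subgraph of G induced by the complement of M'. If e(G') ≤ ((r−1)/(2r))(n − |M'|)², then we reach a contradiction; that is, if every vertex of M' has degree at most (1 − 1/r − ε)n in G, then e(G') > ((r−1)/(2r))(n − |M'|)² cannot fail, i.e., e(G \ M') > ((r−1)/(2r))(n − ⌊εn⌋)². -/
open Real SimpleGraph Finset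

/-!
Every edge of `G` that meets `M'` is incident to a vertex of `M'`, so deleting `M'` loses at
most `∑_{u ∈ M'} d(u) ≤ m(1 - 1/r - ε)n` edges, where `m = ⌊εn⌋`. With `x = εn`, so that
`αn² = x²/2` and `m ≤ x < m + 1 ≤ 2m`, the surplus of `e(G \ M')` over
`(1 - 1/r)(n - m)²/2` is then at least `mx - x²/4 - m²/2 = m²/2 - (2m - x)²/4 ≥ m²/4 > 0`.
-/

namespace SimpleGraph

variable {V : Type*} [Fintype V] [DecidableEq V] (G : SimpleGraph V) [DecidableRel G.Adj]

theorem card_filter_exists_mem_le_sum_degree (S : Finset V) :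
    #{e ∈ G.edgeFinset | ¬∀ v ∈ S, v ∉ e} ≤ ∑ u ∈ S, G.degree u := by
  calc #{e ∈ G.edgeFinset | ¬∀ v ∈ S, v ∉ e}
      ≤ #(S.biUnion fun u ↦ G.incidenceFinset u) := by
        refine card_le_card fun e he ↦ ?_
        obtain ⟨he, hS⟩ := mem_filter.1 he
        push Not at hS
        obtain ⟨v, hv, hve⟩ := hS
        exact mem_biUnion.2 ⟨v, hv, (G.mem_incidenceFinset v e).2 ⟨mem_edgeFinset.1 he, hve⟩⟩
    _ ≤ ∑ u ∈ S, #(G.incidenceFinset u) := card_biUnion_le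
    _ = ∑ u ∈ S, G.degree u := by simp only [card_incidenceFinset_eq_degree]

theorem card_edgeFinset_le_card_filter_add_sum_degree (S : Finset V) :
    #G.edgeFinset ≤ #{e ∈ G.edgeFinset | ∀ v ∈ S, v ∉ e} + ∑ u ∈ S, G.degree u := by
  rw [← card_filter_add_card_filter_not (s := G.edgeFinset) fun e ↦ ∀ v ∈ S, v ∉ e]
  exact Nat.add_le_add_left (G.card_filter_exists_mem_le_sum_degree S) _

end SimpleGraph

theorem half_mul_sq_sub_lt_of_le_of_lt_add_one {t n m x : ℝ} (ht : t ≤ 1) (hm : 1 ≤ m)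
    (hmx : m ≤ x) (hxm : x < m + 1) :
    t / 2 * (n - m) ^ 2 < t * n ^ 2 / 2 - x ^ 2 / 4 - m * (t * n - x) := by
  nlinarith [mul_nonneg (sub_nonneg.2 hmx) (by linarith : (0 : ℝ) ≤ 3 * m - x),
    mul_nonneg (sub_nonneg.2 ht) (sq_nonneg m)]

-- An equality except at `r = 0`, where division by zero makes the left side `0`.
theorem Nat.cast_sub_one_div_two_mul_le (r : ℕ) :
    ((r : ℝ) - 1) / (2 * r) ≤ (1 - 1 / (r : ℝ)) / 2 := by
  rcases r.eq_zero_or_pos with rfl | hr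
  · norm_num
  · have hr : (0 : ℝ) < r := Nat.cast_pos.2 hr
    exact le_of_eq (by field_simp)

theorem removed_small_degree_vertices_dense_general {V : Type*} [Fintype V] [DecidableEq V]
    (G : SimpleGraph V) [DecidableRel G.Adj] (r n : ℕ) (α : ℝ)
    (hεn : Real.sqrt (2 * α) * n > 1)
    (he : (G.edgeFinset.card : ℝ) ≥ (1 - 1 / (r : ℝ) - α) * n ^ 2 / 2)
    (M' : Finset V) (hM'card : M'.card = ⌊Real.sqrt (2 * α) * n⌋₊)
    (hM'deg : ∀ u ∈ M', (G.degree u : ℝ) ≤ (1 - 1 / (r : ℝ) - Real.sqrt (2 * α)) * n) :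
    ((G.edgeFinset.filter fun e => ∀ v ∈ M', v ∉ e).card : ℝ) >
      ((r : ℝ) - 1) / (2 * r) * ((n : ℝ) - M'.card) ^ 2 := by
  set ε := Real.sqrt (2 * α)
  have hε0 : 0 < ε := pos_of_mul_pos_left (one_pos.trans hεn) n.cast_nonneg
  have hαn : α * n ^ 2 = (ε * n) ^ 2 / 2 := by
    rw [mul_pow, sq_sqrt (sqrt_pos.1 hε0).le]; ring
  have hm1 : (1 : ℝ) ≤ M'.card := by
    rw [hM'card]; exact_mod_cast Nat.le_floor (by exact_mod_cast hεn.le)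
  have hmx : (M'.card : ℝ) ≤ ε * n := hM'card ▸ Nat.floor_le (by positivity)
  have hxm : ε * n < M'.card + 1 := hM'card ▸ Nat.lt_floor_add_one _
  have hdeg : ∑ u ∈ M', (G.degree u : ℝ) ≤ M'.card * ((1 - 1 / (r : ℝ) - ε) * n) := by
    simpa using sum_le_sum hM'deg
  have hedges : (#G.edgeFinset : ℝ) ≤
      #{e ∈ G.edgeFinset | ∀ v ∈ M', v ∉ e} + ∑ u ∈ M', (G.degree u : ℝ) := by
    exact_mod_cast G.card_edgeFinset_le_card_filter_add_sum_degree M'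
  have hsurplus := half_mul_sq_sub_lt_of_le_of_lt_add_one (t := 1 - 1 / (r : ℝ)) (n := n)
    (sub_le_self _ (by positivity)) hm1 hmx hxm
  have hratio := mul_le_mul_of_nonneg_right (Nat.cast_sub_one_div_two_mul_le r)
    (sq_nonneg ((n : ℝ) - M'.card))
  linarith

/-- Let `r ≥ 2`, `0 < α < r^{-8}/8`, `ε = √(2α)` with `εn > 1`, and `G` a graph of order
`n` with `e(G) ≥ (1 - 1/r - α)n²/2`. If `M'` is a set of exactly `⌊εn⌋` vertices of `G`,
each of degree at most `(1 - 1/r - ε)n`, then the graph `G'` induced on the complement of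
`M'` satisfies `e(G') > ((r-1)/(2r))·(n - ⌊εn⌋)²`. -/
theorem removed_small_degree_vertices_dense {V : Type*} [Fintype V] [DecidableEq V]
    (G : SimpleGraph V) [DecidableRel G.Adj] (r n : ℕ) (α : ℝ)
    (hr : 2 ≤ r) (hn : Fintype.card V = n)
    (hα0 : 0 < α) (hα1 : α < ((r : ℝ) ^ 8)⁻¹ / 8)
    (hεn : Real.sqrt (2 * α) * n > 1)
    (he : (G.edgeFinset.card : ℝ) ≥ (1 - 1 / (r : ℝ) - α) * n ^ 2 / 2)
    (M' : Finset V) (hM'card : M'.card = ⌊Real.sqrt (2 * α) * n⌋₊)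
    (hM'deg : ∀ u ∈ M', (G.degree u : ℝ) ≤ (1 - 1 / (r : ℝ) - Real.sqrt (2 * α)) * n) :
    ((G.edgeFinset.filter fun e => ∀ v ∈ M', v ∉ e).card : ℝ) >
      ((r : ℝ) - 1) / (2 * r) * ((n : ℝ) - M'.card) ^ 2 :=
  removed_small_degree_vertices_dense_general G r n α hεn he M' hM'card hM'deg
end
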